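/- Let X be a graph with chromatic number 3 and without isolated vertices. Then for every triangle C₁C₂C₃ in the 3-coloring complex B(X), the sets C₁, C₂, C₃ form a 3-coloring of X (that is, {C₁, C₂, C₃} is a partition of V(X) into independent sets); consequently, every edge of B(X) is contained in exactly one triangle of B(X). -/

import Mathlib

open SimpleGraph

/-- A `k`-coloring of a graph `X`: a partition of the vertex set into `k`
(possibly empty) independent sets, the color classes of the coloring. -/
def IsColoring {V : Type*} (k : ℕ) (X : SimpleGraph V) (c : Fin k → Set V) : Prop :=
  (∀ v : V, ∃! i : Fin k, v ∈ c i) ∧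
  ∀ i : Fin k, ∀ u ∈ c i, ∀ w ∈ c i, ¬ X.Adj u w

/-- `S` occurs as a color class in some `k`-coloring of `X`. -/
def IsColorClass {V : Type*} (k : ℕ) (X : SimpleGraph V) (S : Set V) : Prop :=
  ∃ c : Fin k → Set V, IsColoring k X c ∧ ∃ i, c i = S

/-- The `k`-coloring complex `B(X)`: vertices are the color classes of
`k`-colorings of `X`, two of them adjacent if they occur together in some
`k`-coloring of `X`. -/
def ColoringComplex {V : Type*} (k : ℕ) (X : SimpleGraph V) :
    SimpleGraph {S : Set V // IsColorClass k X S} where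
  Adj C D := C ≠ D ∧ ∃ c : Fin k → Set V,
    IsColoring k X c ∧ (∃ i, c i = C.1) ∧ (∃ j, c j = D.1)
  symm := by
    constructor
    rintro C D ⟨hne, c, hc, hi, hj⟩
    exact ⟨hne.symm, c, hc, hj, hi⟩
  loopless := by constructor; rintro C ⟨hne, -⟩; exact hne rfl

/-- The canonical map `φ_X`, sending a vertex `v` to the set of all color
classes containing `v`. -/
def phi {V : Type*} (k : ℕ) (X : SimpleGraph V) (v : V) :
    Set {S : Set V // IsColorClass k X S} :=
  {C | v ∈ C.1}

/-- `X` is reflexive for `k`-colorings: the canonical map `φ_X` is a graph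
isomorphism from `X` onto `B²(X) = B(B(X))`. -/
def IsReflexive {V : Type*} (k : ℕ) (X : SimpleGraph V) : Prop :=
  ∃ f : X ≃g ColoringComplex k (ColoringComplex k X),
    ∀ v : V, (f v : {T // IsColorClass k (ColoringComplex k X) T}).1 = phi k X v

/-- `X` is colorful for `k`-colorings: any two distinct vertices lie in
different color classes of some `k`-coloring of `X`. -/
def Colorful {V : Type*} (k : ℕ) (X : SimpleGraph V) : Prop :=
  ∀ x y : V, x ≠ y → ∃ c : Fin k → Set V, IsColoring k X c ∧
    ∃ i j : Fin k, i ≠ j ∧ x ∈ c i ∧ y ∈ c j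

/-!
Two adjacent classes `C`, `D` of the complex sit in a 3-coloring whose third class is forced to be
`(C ∪ D)ᶜ`, which is therefore independent. Given a triangle `C₁C₂C₃` and a vertex `v` outside all
three, a neighbour `u` of `v` must lie in each of `C₁ ∪ C₂`, `C₂ ∪ C₃`, `C₁ ∪ C₃`, hence in two of
the pairwise disjoint `Cᵢ`; so `C₃ = (C₁ ∪ C₂)ᶜ`. This pins down the third vertex of any triangle
on an edge `CD`, and it exists because `(C ∪ D)ᶜ = ∅` would make `X` bipartite.
-/

open Set

section

variable {V : Type*} {X : SimpleGraph V}

theorem SimpleGraph.isBipartiteWith_of_isIndepSet {A B : Set V} (hAB : Disjoint A B)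
    (hA : X.IsIndepSet A) (hB : X.IsIndepSet B) (hcover : A ∪ B = univ) :
    X.IsBipartiteWith A B where
  disjoint := hAB
  mem_of_adj v w hvw := by
    have hv : v ∈ A ∪ B := hcover ▸ mem_univ v
    have hw : w ∈ A ∪ B := hcover ▸ mem_univ w
    rcases hv with hvA | hvB <;> rcases hw with hwA | hwB
    exacts [(hA hvA hwA hvw.ne hvw).elim, .inl ⟨hvA, hwB⟩, .inr ⟨hvB, hwA⟩,
      (hB hvB hwB hvw.ne hvw).elim]

namespace IsColoring

variable {k : ℕ} {c : Fin k → Set V}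

theorem isIndepSet (hc : IsColoring k X c) (i : Fin k) : X.IsIndepSet (c i) :=
  fun u hu w hw _ => hc.2 i u hu w hw

theorem disjoint (hc : IsColoring k X c) {i j : Fin k} (hij : i ≠ j) : Disjoint (c i) (c j) :=
  Set.disjoint_left.2 fun v hvi hvj => hij ((hc.1 v).unique hvi hvj)

theorem eq_compl_union {c : Fin 3 → Set V} (hc : IsColoring 3 X c) {i j l : Fin 3}
    (hij : i ≠ j) (hil : i ≠ l) (hjl : j ≠ l) : c l = (c i ∪ c j)ᶜ := by
  ext v
  constructor
  · rintro hvl (hvi | hvj)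
    exacts [hil ((hc.1 v).unique hvi hvl), hjl ((hc.1 v).unique hvj hvl)]
  · intro hv
    simp only [mem_compl_iff, mem_union, not_or] at hv
    obtain ⟨m, hvm, -⟩ := hc.1 v
    have hmi : m ≠ i := by rintro rfl; exact hv.1 hvm
    have hmj : m ≠ j := by rintro rfl; exact hv.2 hvm
    obtain rfl : m = l := by omega
    exact hvm

end IsColoring

theorem isColoring_compl_union {A B : Set V} (hAB : Disjoint A B) (hA : X.IsIndepSet A)
    (hB : X.IsIndepSet B) (hAB' : X.IsIndepSet (A ∪ B)ᶜ) : IsColoring 3 X ![A, B, (A ∪ B)ᶜ] := by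
  refine ⟨fun v => ?_, fun i => ?_⟩
  · by_cases hvA : v ∈ A
    · have hvB : v ∉ B := Set.disjoint_left.1 hAB hvA
      refine ⟨0, hvA, fun j hj => ?_⟩
      fin_cases j <;> simp_all
    by_cases hvB : v ∈ B
    · refine ⟨1, hvB, fun j hj => ?_⟩
      fin_cases j <;> simp_all
    · refine ⟨2, by simp [hvA, hvB], fun j hj => ?_⟩
      fin_cases j <;> simp_all
  · fin_cases i
    exacts [fun u hu w hw h => hA hu hw h.ne h, fun u hu w hw h => hB hu hw h.ne h,
      fun u hu w hw h => hAB' hu hw h.ne h]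

namespace ColoringComplex

variable {C D : {S : Set V // IsColorClass 3 X S}}

theorem isColoring_of_adj (h : (ColoringComplex 3 X).Adj C D) :
    IsColoring 3 X ![C.1, D.1, (C.1 ∪ D.1)ᶜ] := by
  obtain ⟨hCD, c, hc, ⟨i, hi⟩, ⟨j, hj⟩⟩ := h
  have hij : i ≠ j := by rintro rfl; exact hCD (Subtype.ext (hi.symm.trans hj))
  have third : ∀ i j : Fin 3, i ≠ j → ∃ l, i ≠ l ∧ j ≠ l := by decide
  obtain ⟨l, hil, hjl⟩ := third i j hij
  rw [← hi, ← hj]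
  exact isColoring_compl_union (hc.disjoint hij) (hc.isIndepSet i) (hc.isIndepSet j)
    (hc.eq_compl_union hij hil hjl ▸ hc.isIndepSet l)

theorem disjoint_of_adj (h : (ColoringComplex 3 X).Adj C D) : Disjoint C.1 D.1 :=
  (isColoring_of_adj h).disjoint (i := 0) (j := 1) (by decide)

theorem mem_union_of_adj (h : (ColoringComplex 3 X).Adj C D) {v u : V} (hvu : X.Adj v u)
    (hvC : v ∉ C.1) (hvD : v ∉ D.1) : u ∈ C.1 ∪ D.1 := by
  by_contra hu
  exact (isColoring_of_adj h).isIndepSet 2 (by simp [hvC, hvD]) hu hvu.ne hvu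

theorem eq_compl_union_of_triangle (hnoiso : ∀ v : V, ∃ u, X.Adj v u)
    {C₁ C₂ C₃ : {S : Set V // IsColorClass 3 X S}} (h12 : (ColoringComplex 3 X).Adj C₁ C₂)
    (h23 : (ColoringComplex 3 X).Adj C₂ C₃) (h13 : (ColoringComplex 3 X).Adj C₁ C₃) :
    C₃.1 = (C₁.1 ∪ C₂.1)ᶜ := by
  have d12 := Set.disjoint_left.1 (disjoint_of_adj h12)
  have d23 := Set.disjoint_left.1 (disjoint_of_adj h23)
  have d13 := Set.disjoint_left.1 (disjoint_of_adj h13)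
  refine subset_antisymm (fun v hv3 => ?_) (fun v hv => ?_)
  · rintro (hv1 | hv2)
    exacts [d13 hv1 hv3, d23 hv2 hv3]
  · simp only [mem_compl_iff, mem_union, not_or] at hv
    obtain ⟨hv1, hv2⟩ := hv
    by_contra hv3
    obtain ⟨u, hvu⟩ := hnoiso v
    rcases mem_union_of_adj h12 hvu hv1 hv2 with hu1 | hu2
    · rcases mem_union_of_adj h23 hvu hv2 hv3 with hu2 | hu3
      exacts [d12 hu1 hu2, d13 hu1 hu3]
    · rcases mem_union_of_adj h13 hvu hv1 hv3 with hu1 | hu3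
      exacts [d12 hu1 hu2, d23 hu2 hu3]

theorem compl_union_nonempty_of_adj (hX : ¬X.IsBipartite) (h : (ColoringComplex 3 X).Adj C D) :
    (C.1 ∪ D.1)ᶜ.Nonempty := by
  rw [nonempty_iff_ne_empty, Ne, compl_empty_iff]
  intro hcover
  have hc := isColoring_of_adj h
  exact hX (isBipartiteWith_of_isIndepSet (disjoint_of_adj h) (hc.isIndepSet 0)
    (hc.isIndepSet 1) hcover).isBipartite

def thirdClass (h : (ColoringComplex 3 X).Adj C D) : {S : Set V // IsColorClass 3 X S} :=
  ⟨(C.1 ∪ D.1)ᶜ, _, isColoring_of_adj h, 2, rfl⟩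

theorem adj_thirdClass (h : (ColoringComplex 3 X).Adj C D) (hne : (C.1 ∪ D.1)ᶜ.Nonempty) :
    (ColoringComplex 3 X).Adj C (thirdClass h) ∧ (ColoringComplex 3 X).Adj D (thirdClass h) := by
  obtain ⟨x, hx⟩ := hne
  refine ⟨⟨fun hC => hx (.inl ?_), _, isColoring_of_adj h, ⟨0, rfl⟩, ⟨2, rfl⟩⟩,
    ⟨fun hD => hx (.inr ?_), _, isColoring_of_adj h, ⟨1, rfl⟩, ⟨2, rfl⟩⟩⟩
  · rw [hC]
    exact hx
  · rw [hD]
    exact hx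

end ColoringComplex

end

open ColoringComplex in
/-- In the 3-coloring complex of a 3-chromatic graph without isolated
vertices, every triangle represents a 3-coloring of `X`, and every edge lies
in exactly one triangle. -/
theorem triangle_in_complex_is_coloring {V : Type*} (X : SimpleGraph V)
    (hchrom : X.chromaticNumber = 3)
    (hnoiso : ∀ v : V, ∃ u, X.Adj v u) :
    (∀ C₁ C₂ C₃ : {S : Set V // IsColorClass 3 X S},
      (ColoringComplex 3 X).Adj C₁ C₂ → (ColoringComplex 3 X).Adj C₂ C₃ →
      (ColoringComplex 3 X).Adj C₁ C₃ →
      IsColoring 3 X ![C₁.1, C₂.1, C₃.1]) ∧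
    (∀ C D : {S : Set V // IsColorClass 3 X S}, (ColoringComplex 3 X).Adj C D →
      ∃! F, (ColoringComplex 3 X).Adj C F ∧ (ColoringComplex 3 X).Adj D F) := by
  have hX : ¬X.IsBipartite := by
    rw [← chromaticNumber_le_two_iff_isBipartite, hchrom]
    decide
  refine ⟨fun C₁ C₂ C₃ h12 h23 h13 => ?_, fun C D h => ?_⟩
  · rw [eq_compl_union_of_triangle hnoiso h12 h23 h13]
    exact isColoring_of_adj h12
  · refine ⟨thirdClass h, adj_thirdClass h (compl_union_nonempty_of_adj hX h), ?_⟩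
    rintro F ⟨hCF, hDF⟩
    exact Subtype.ext (eq_compl_union_of_triangle hnoiso h hDF hCF)
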